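/- arXiv:0808.2998 — 5 statements merged into one kernel-verified Lean document; each statement's English description precedes it below -/
import Mathlib

section
/- Let k be a field of characteristic 2 and V a 2n-dimensional k-vector space with non-degenerate symplectic form β given by β(v,w) = vᵗSw where S is the block matrix [[0, I],[I, 0]]. Let g = sp(V) = {x ∈ gl(V) : β(xv,w) + β(v,xw) = 0 for all v,w}. For ξ ∈ g*, choose X ∈ gl(V) with ξ(x) = tr(Xx) for all x ∈ g. Then the element T_ξ = X + SXᵗS and the quadratic form α_ξ(v) = β(v, Xv) are well-defined, i.e., independent of the choice of X. -/
/-!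
Put `Y = X - X'`. In characteristic 2, `x = M S` lies in `sp(2n)` for every symmetric `M`,
and `tr (Y (M S)) = tr (S Y M)`, so `tr (S Y M) = 0` for all symmetric `M`. Taking
`M = v vᵀ` shows that the quadratic form `v ↦ vᵀ S Y v`, which is `α_ξ` for `X` minus
`α_ξ` for `X'`, vanishes. By polarization `S Y` is then skew, `(S Y)ᵀ = - S Y`, which
after multiplying by `S` on the left reads `S Yᵀ S = - Y`, i.e. `Y + S Yᵀ S = 0`.
-/

open Matrix

namespace Matrix

variable {ι R : Type*}

theorem isSymm_vecMulVec_self [CommMagma R] (v : ι → R) : (vecMulVec v v).IsSymm :=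
  transpose_vecMulVec v v

variable [Fintype ι] [CommRing R]

theorem dotProduct_mulVec_self_eq_zero_of_trace_mul_isSymm {A : Matrix ι ι R}
    (hA : ∀ M : Matrix ι ι R, M.IsSymm → (A * M).trace = 0) (v : ι → R) :
    v ⬝ᵥ A *ᵥ v = 0 := by
  rw [← hA _ (isSymm_vecMulVec_self v), mul_vecMulVec, trace_vecMulVec, dotProduct_comm]

theorem transpose_eq_neg_of_dotProduct_mulVec_self_eq_zero {A : Matrix ι ι R}
    (hA : ∀ v : ι → R, v ⬝ᵥ A *ᵥ v = 0) : Aᵀ = -A := by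
  classical
  have hAlt : (toLinearMap₂' R A).IsAlt := fun v => by rw [toLinearMap₂'_apply', hA]
  ext i j
  have hji := (hAlt.neg (Pi.single i 1) (Pi.single j 1)).symm
  simp only [toLinearMap₂'_apply'] at hji
  simpa using hji

theorem mul_transpose_mul_eq_neg_of_mul_transpose_eq_neg [DecidableEq ι] {S Y : Matrix ι ι R}
    (hSt : Sᵀ = S) (hSS : S * S = 1) (hSY : (S * Y)ᵀ = -(S * Y)) : S * Yᵀ * S = -Y := by
  rw [Matrix.mul_assoc, ← hSt, ← transpose_mul, hSY, hSt, Matrix.mul_neg, ← Matrix.mul_assoc,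
    hSS, Matrix.one_mul]

theorem transpose_mul_mul_add_mul_mul_eq_zero [CharP R 2] {S M : Matrix ι ι R}
    (hSt : Sᵀ = S) (hM : M.IsSymm) : (M * S)ᵀ * S + S * (M * S) = 0 := by
  rw [transpose_mul, hSt, hM.eq, ← Matrix.mul_assoc, ← two_smul R, CharTwo.two_eq_zero,
    zero_smul]

end Matrix

/-- In characteristic 2, for the symplectic Lie algebra
`sp(2n) = {x : xᵀS + Sx = 0}` with `S = [[0,I],[I,0]]`, if `X` and `X'` induce the same
linear functional `x ↦ tr(Xx)` on `sp(2n)`, then `X + SXᵀS = X' + SX'ᵀS` and the quadratic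
forms `v ↦ β(v, Xv) = vᵀSXv` agree; i.e. `T_ξ` and `α_ξ` are well-defined. -/
theorem sp_dual_Txi_alphaxi_well_defined
    {k : Type*} [Field k] [CharP k 2] (n : ℕ)
    (S : Matrix (Fin n ⊕ Fin n) (Fin n ⊕ Fin n) k)
    (hS : S = Matrix.fromBlocks 0 1 1 0)
    (X X' : Matrix (Fin n ⊕ Fin n) (Fin n ⊕ Fin n) k)
    (h : ∀ x : Matrix (Fin n ⊕ Fin n) (Fin n ⊕ Fin n) k,
      xᵀ * S + S * x = 0 → (X * x).trace = (X' * x).trace) :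
    X + S * Xᵀ * S = X' + S * X'ᵀ * S ∧
    ∀ v : Fin n ⊕ Fin n → k,
      v ⬝ᵥ S.mulVec (X.mulVec v) = v ⬝ᵥ S.mulVec (X'.mulVec v) := by
  have hSt : Sᵀ = S := by simp [hS, fromBlocks_transpose]
  have hSS : S * S = 1 := by simp [hS, fromBlocks_multiply]
  have htrace : ∀ M, M.IsSymm → (S * (X - X') * M).trace = 0 := fun M hM => by
    rw [← trace_mul_cycle, Matrix.mul_assoc, Matrix.sub_mul, trace_sub,
      h _ (transpose_mul_mul_add_mul_mul_eq_zero hSt hM), sub_self]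
  have hquad := dotProduct_mulVec_self_eq_zero_of_trace_mul_isSymm htrace
  have hskew := mul_transpose_mul_eq_neg_of_mul_transpose_eq_neg hSt hSS
    (transpose_eq_neg_of_dotProduct_mulVec_self_eq_zero hquad)
  refine ⟨?_, fun v => ?_⟩
  · rw [← sub_eq_zero]
    calc X + S * Xᵀ * S - (X' + S * X'ᵀ * S) = X - X' + S * (X - X')ᵀ * S := by
          simp only [transpose_sub, Matrix.mul_sub, Matrix.sub_mul]; abel
      _ = 0 := by rw [hskew, add_neg_cancel]
  · rw [← sub_eq_zero, mulVec_mulVec, mulVec_mulVec, ← dotProduct_sub, ← sub_mulVec,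
      ← Matrix.mul_sub, hquad]
end

section
/- Let k have characteristic 2, V = k^{2n} with symplectic form β(v,w) = vᵗSw, S = [[0,I],[I,0]], and g = sp(2n). For X, X' ∈ gl(2n,k), one has tr(Xx) = tr(X'x) for all x ∈ g if and only if β((X+X')v, v) = 0 for all v ∈ V. -/
open Matrix

private lemma quad_sum {ι : Type*} [Fintype ι] {k : Type*} [CommRing k]
    (M : Matrix ι ι k) (v : ι → k) :
    v ⬝ᵥ M.mulVec v = ∑ p ∈ Finset.univ ×ˢ Finset.univ, v p.1 * (M p.1 p.2 * v p.2) := by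
  rw [Finset.sum_product]
  simp [dotProduct, Matrix.mulVec, Finset.mul_sum]

private lemma trace_mul_sum {ι : Type*} [Fintype ι] {k : Type*} [CommRing k]
    (M B : Matrix ι ι k) :
    (M * B).trace = ∑ p ∈ Finset.univ ×ˢ Finset.univ, M p.1 p.2 * B p.2 p.1 := by
  rw [Finset.sum_product]
  simp [Matrix.trace, Matrix.diag, Matrix.mul_apply]

private lemma std_sum {ι : Type*} [Fintype ι] [DecidableEq ι] {k : Type*} [CommRing k]
    (M : Matrix ι ι k) (i j : ι) :
    (∑ p ∈ Finset.univ ×ˢ Finset.univ,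
      M p.1 p.2 * (Matrix.single i j (1 : k)) p.2 p.1) = M j i := by
  rw [Finset.sum_product]
  simp [Matrix.single, ite_and, mul_ite, Finset.sum_ite_eq, Finset.sum_ite_eq']

private lemma std_transpose {ι : Type*} [DecidableEq ι] {k : Type*} [CommRing k] (i j : ι) :
    (Matrix.single i j (1 : k))ᵀ = Matrix.single j i 1 := by
  ext a b
  simp only [Matrix.transpose_apply, Matrix.single, Matrix.of_apply]
  exact if_congr and_comm rfl rfl

private lemma std_symm {ι : Type*} [DecidableEq ι] {k : Type*} [CommRing k] (i j : ι) :
    (Matrix.single i j (1 : k) + Matrix.single j i 1)ᵀ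
      = Matrix.single i j 1 + Matrix.single j i 1 := by
  rw [Matrix.transpose_add, std_transpose, std_transpose, add_comm]

private lemma single_quad {ι : Type*} [Fintype ι] [DecidableEq ι] {k : Type*} [CommRing k]
    (M : Matrix ι ι k) (i : ι) :
    (Pi.single i 1 : ι → k) ⬝ᵥ M.mulVec (Pi.single i 1) = M i i := by
  simp [Matrix.mulVec_single, single_dotProduct]

private lemma pair_quad {ι : Type*} [Fintype ι] [DecidableEq ι] {k : Type*} [CommRing k]
    (M : Matrix ι ι k) (i j : ι) :
    ((Pi.single i 1 + Pi.single j 1 : ι → k)) ⬝ᵥ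
        M.mulVec (Pi.single i 1 + Pi.single j 1)
      = M i i + M i j + (M j i + M j j) := by
  simp [Matrix.mulVec_add, dotProduct_add, add_dotProduct,
    Matrix.mulVec_single, single_dotProduct]
  ring

/-- In characteristic 2, for `S = [[0,I],[I,0]]` and
`sp(2n) = {x : xᵀS + Sx = 0}`, two matrices `X, X'` induce the same trace functional on
`sp(2n)` iff `β((X+X')v, v) = 0` for all `v`, where `β(v,w) = vᵀSw`. -/
theorem sp_trace_functional_eq_iff
    {k : Type*} [Field k] [CharP k 2] (n : ℕ)
    (S : Matrix (Fin n ⊕ Fin n) (Fin n ⊕ Fin n) k)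
    (hS : S = Matrix.fromBlocks 0 1 1 0)
    (X X' : Matrix (Fin n ⊕ Fin n) (Fin n ⊕ Fin n) k) :
    (∀ x : Matrix (Fin n ⊕ Fin n) (Fin n ⊕ Fin n) k,
        xᵀ * S + S * x = 0 → (X * x).trace = (X' * x).trace) ↔
    (∀ v : Fin n ⊕ Fin n → k, ((X + X').mulVec v) ⬝ᵥ S.mulVec v = 0) := by
  have h2 : ∀ a : k, a + a = 0 := fun a => CharTwo.add_self_eq_zero a
  have heq2 : ∀ a b : k, a + b = 0 ↔ a = b := fun a b => by
    rw [add_eq_zero_iff_eq_neg, CharTwo.neg_eq]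
  have hSsymm : Sᵀ = S := by
    rw [hS, Matrix.fromBlocks_transpose]
    simp
  have hSS : S * S = 1 := by
    rw [hS, Matrix.fromBlocks_multiply]
    simp [← Matrix.fromBlocks_one]
  set Y := X + X' with hY
  set M := Y * S with hM
  -- the quadratic form substitution
  have hqM : ∀ v, Y.mulVec v ⬝ᵥ S.mulVec v = (S.mulVec v) ⬝ᵥ M.mulVec (S.mulVec v) := by
    intro v
    rw [hM, mulVec_mulVec, Matrix.mul_assoc, hSS, Matrix.mul_one, dotProduct_comm]
  -- characterization of alternating quadratic form
  have hP : (∀ w, w ⬝ᵥ M.mulVec w = 0) ↔ ((∀ i, M i i = 0) ∧ ∀ i j, M i j = M j i) := by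
    constructor
    · intro h
      have hd : ∀ i, M i i = 0 := by
        intro i
        have := h (Pi.single i 1)
        rwa [single_quad] at this
      refine ⟨hd, fun i j => ?_⟩
      have := h (Pi.single i 1 + Pi.single j 1)
      rw [pair_quad, hd i, hd j] at this
      rw [← heq2]
      linear_combination this
    · rintro ⟨hd, hs⟩ w
      have key : ∀ i j : Fin n ⊕ Fin n,
          w i * (M i j * w j) + w j * (M j i * w i) = 0 := by
        intro i j
        rw [hs i j]
        linear_combination h2 (w i * (M j i * w j))
      rw [quad_sum]
      refine Finset.sum_involution (fun p _ => (p.2, p.1)) ?_ ?_ ?_ ?_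
      · intro p _
        exact key p.1 p.2
      · intro p _ hf h
        apply hf
        have hpp : p.1 = p.2 := (congrArg Prod.fst h).symm
        show w p.1 * (M p.1 p.2 * w p.2) = 0
        rw [hpp, hd p.2]
        ring
      · intro p _; simp
      · intro p _; rfl
  -- membership of S*B for symmetric B
  have hmem : ∀ B : Matrix (Fin n ⊕ Fin n) (Fin n ⊕ Fin n) k, Bᵀ = B →
      (S * B)ᵀ * S + S * (S * B) = 0 := by
    intro B hB
    rw [Matrix.transpose_mul, hSsymm, hB, Matrix.mul_assoc, hSS, Matrix.mul_one,
      ← Matrix.mul_assoc, hSS, Matrix.one_mul]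
    ext i j
    simpa using h2 (B i j)
  have htrace : ∀ B : Matrix (Fin n ⊕ Fin n) (Fin n ⊕ Fin n) k,
      (Y * (S * B)).trace = ∑ p ∈ Finset.univ ×ˢ Finset.univ, M p.1 p.2 * B p.2 p.1 := by
    intro B
    rw [← Matrix.mul_assoc, ← hM, trace_mul_sum]
  -- reduce the LHS to vanishing of trace of Y*x
  have hLHS : (∀ x : Matrix (Fin n ⊕ Fin n) (Fin n ⊕ Fin n) k,
        xᵀ * S + S * x = 0 → (X * x).trace = (X' * x).trace) ↔
      (∀ x : Matrix (Fin n ⊕ Fin n) (Fin n ⊕ Fin n) k,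
        xᵀ * S + S * x = 0 → (Y * x).trace = 0) := by
    apply forall_congr'
    intro x
    apply imp_congr_right
    intro _
    rw [hY, Matrix.add_mul, Matrix.trace_add]
    constructor
    · intro h; rw [h, h2]
    · intro h; exact (heq2 _ _).mp h
  rw [hLHS]
  -- reduce the RHS to the quadratic form of M
  have hRHS : (∀ v : Fin n ⊕ Fin n → k, (Y.mulVec v) ⬝ᵥ S.mulVec v = 0) ↔
      (∀ w, w ⬝ᵥ M.mulVec w = 0) := by
    constructor
    · intro h w
      have := h (S.mulVec w)
      rwa [hqM, mulVec_mulVec, hSS, one_mulVec] at this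
    · intro h v
      rw [hqM]; exact h _
  rw [show (∀ v : Fin n ⊕ Fin n → k, ((X + X').mulVec v) ⬝ᵥ S.mulVec v = 0) ↔
      (∀ v, (Y.mulVec v) ⬝ᵥ S.mulVec v = 0) from Iff.rfl, hRHS, hP]
  -- now the trace condition ↔ M zero-diagonal symmetric
  constructor
  · intro h
    have h' : ∀ B : Matrix (Fin n ⊕ Fin n) (Fin n ⊕ Fin n) k, Bᵀ = B →
        (∑ p ∈ Finset.univ ×ˢ Finset.univ, M p.1 p.2 * B p.2 p.1) = 0 := by
      intro B hB
      rw [← htrace]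
      exact h (S * B) (hmem B hB)
    constructor
    · intro i
      have := h' (Matrix.single i i 1) (std_transpose i i)
      rwa [std_sum] at this
    · intro i j
      have := h' (Matrix.single i j 1 + Matrix.single j i 1) (std_symm i j)
      simp only [Matrix.add_apply, mul_add, Finset.sum_add_distrib, std_sum] at this
      rw [← heq2]
      linear_combination this
  · rintro ⟨hd, hs⟩ x hx
    have hA : (S * x)ᵀ = S * x := by
      rw [Matrix.transpose_mul, hSsymm]
      ext i j
      have := congrFun (congrFun hx i) j
      simp only [Matrix.add_apply, Matrix.zero_apply] at this
      exact (heq2 _ _).mp this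
    have hYx : Y * x = Y * (S * (S * x)) := by
      rw [← Matrix.mul_assoc S S x, hSS, Matrix.one_mul]
    have hAs : ∀ a b, (S * x) b a = (S * x) a b := by
      intro a b
      exact (congrFun (congrFun hA b) a).symm
    rw [hYx, htrace]
    refine Finset.sum_involution (fun p _ => (p.2, p.1)) ?_ ?_ ?_ ?_
    · intro p _
      show M p.1 p.2 * (S * x) p.2 p.1 + M p.2 p.1 * (S * x) p.1 p.2 = 0
      rw [hs p.2 p.1, hAs p.2 p.1]
      exact h2 _
    · intro p _ hf h
      apply hf
      have hpp : p.1 = p.2 := (congrArg Prod.fst h).symm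
      show M p.1 p.2 * (S * x) p.2 p.1 = 0
      rw [hpp, hd p.2]
      ring
    · intro p _; simp
    · intro p _; rfl
end

section
/- The number of pairs of partitions (μ, ν) with |μ| + |ν| = n and ν_i ≤ μ_i + 1 for all i equals p₂(n) − p₂(n−2), where p₂(m) denotes the number of pairs of partitions (λ, ρ) with |λ| + |ρ| = m. -/
/-- A partition encoded as a weakly decreasing function `ℕ → ℕ` with finitely many
nonzero parts (zero-padded). -/
def IsPartitionFun (f : ℕ → ℕ) : Prop :=
  Antitone f ∧ ∃ N, ∀ i, N ≤ i → f i = 0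

/-- `p₂ m` = number of pairs of partitions of total size `m`. -/
noncomputable def numPartitionPairs (m : ℕ) : ℕ :=
  Nat.card {p : (ℕ → ℕ) × (ℕ → ℕ) //
    IsPartitionFun p.1 ∧ IsPartitionFun p.2 ∧
      (∑ᶠ i, p.1 i) + (∑ᶠ i, p.2 i) = m}

/-!
Split all pairs of total size `n` into those with `νᵢ ≤ μᵢ + 1` for all `i` and those with some
`νᵢ ≥ μᵢ + 2`; the latter are in bijection with all pairs of total size `n - 2`. If `j` is the
first index with `ν_j ≥ μ_j + 2`, send `(μ, ν)` to
`κ = (ν₀ - 2, …, ν_j - 2, μ_j, μ_{j+1}, …)` and `σ = (μ₀ + 2, …, μ_{j-1} + 2, ν_{j+1}, ν_{j+2}, …)`.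
The first `j + 1` parts of `ν` lose `2` each and the first `j` parts of `μ` gain `2` each, so the
size drops by `2`. Minimality of `j` keeps both sequences weakly decreasing, and `j` is recovered as
the first index with `σ_j ≤ κ_j + 2`, which makes the map invertible.
-/

open Finset

section EventuallyZero

variable {M : Type*} [AddCommMonoid M] {f : ℕ → M} {N : ℕ}

lemma finsum_eq_sum_range_of_eq_zero (h : ∀ i, N ≤ i → f i = 0) :
    ∑ᶠ i, f i = ∑ i ∈ range N, f i :=
  finsum_eq_sum_of_support_subset f fun i hi => by
    by_contra hN
    exact hi (h i (by simpa using hN))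

lemma finsum_eq_sum_range_add_finsum (h : ∀ i, N ≤ i → f i = 0) (j : ℕ) :
    ∑ᶠ i, f i = ∑ i ∈ range j, f i + ∑ᶠ i, f (j + i) := by
  rw [finsum_eq_sum_range_of_eq_zero (N := j + N) fun i hi => h i (by omega),
    finsum_eq_sum_range_of_eq_zero (N := N) fun i hi => h (j + i) (by omega), sum_range_add]

end EventuallyZero

namespace IsPartitionFun

variable {f : ℕ → ℕ}

lemma le_finsum (hf : IsPartitionFun f) (i : ℕ) : f i ≤ ∑ᶠ k, f k := by
  obtain ⟨N, hN⟩ := hf.2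
  rw [finsum_eq_sum_range_add_finsum hN (i + 1)]
  exact le_add_right (single_le_sum (fun _ _ => Nat.zero_le _) (self_mem_range_succ i))

lemma eq_zero_of_finsum_le (hf : IsPartitionFun f) {i : ℕ} (hi : ∑ᶠ k, f k ≤ i) : f i = 0 := by
  obtain ⟨N, hN⟩ := hf.2
  by_contra hfi
  have hpos : ∀ k ∈ range (i + 1), 1 ≤ f k := fun k hk =>
    (Nat.one_le_iff_ne_zero.2 hfi).trans (hf.1 (mem_range_succ_iff.1 hk))
  have := card_nsmul_le_sum (range (i + 1)) (fun k => f k) 1 hpos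
  rw [finsum_eq_sum_range_add_finsum hN (i + 1)] at hi
  simp only [card_range, smul_eq_mul, mul_one] at this
  omega

lemma exists_le_add (hf : IsPartitionFun f) (g : ℕ → ℕ) (c : ℕ) : ∃ i, f i ≤ g i + c :=
  let ⟨N, hN⟩ := hf.2
  ⟨N, by rw [hN N le_rfl]; exact Nat.zero_le _⟩

end IsPartitionFun

def spliceLe (f g : ℕ → ℕ) (j i : ℕ) : ℕ := if i ≤ j then f i else g (i - 1)

def spliceLt (f g : ℕ → ℕ) (j i : ℕ) : ℕ := if i < j then f i else g (i + 1)

section Splice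

variable {f g : ℕ → ℕ} {j N : ℕ}

lemma antitone_spliceLe (hf : Antitone f) (hg : Antitone g) (hj : g j ≤ f j) :
    Antitone (spliceLe f g j) := by
  refine antitone_nat_of_succ_le fun i => ?_
  obtain hij | rfl | hji := lt_trichotomy i j
  · rw [spliceLe, spliceLe, if_pos (Nat.succ_le_of_lt hij), if_pos hij.le]
    exact hf i.le_succ
  · rw [spliceLe, spliceLe, if_neg (by omega), if_pos le_rfl, Nat.add_sub_cancel]
    exact hj
  · rw [spliceLe, spliceLe, if_neg (by omega), if_neg (by omega)]
    exact hg (by omega)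

lemma antitone_spliceLt (hf : Antitone f) (hg : Antitone g) (hj : ∀ i < j, g (i + 2) ≤ f i) :
    Antitone (spliceLt f g j) := by
  refine antitone_nat_of_succ_le fun i => ?_
  obtain hij | rfl | hji := lt_trichotomy (i + 1) j
  · rw [spliceLt, spliceLt, if_pos hij, if_pos (by omega)]
    exact hf i.le_succ
  · rw [spliceLt, spliceLt, if_neg (lt_irrefl _), if_pos i.lt_succ_self]
    exact hj i i.lt_succ_self
  · rw [spliceLt, spliceLt, if_neg (by omega), if_neg (by omega)]
    exact hg (by omega)

lemma spliceLe_eq_zero (hg : ∀ i, N ≤ i → g i = 0) :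
    ∀ i, N + j + 1 ≤ i → spliceLe f g j i = 0 := fun i hi => by
  rw [spliceLe, if_neg (by omega)]
  exact hg _ (by omega)

lemma spliceLt_eq_zero (hg : ∀ i, N ≤ i → g i = 0) :
    ∀ i, N + j ≤ i → spliceLt f g j i = 0 := fun i hi => by
  rw [spliceLt, if_neg (by omega)]
  exact hg _ (by omega)

lemma IsPartitionFun.spliceLe (hf : Antitone f) (hg : IsPartitionFun g) (hj : g j ≤ f j) :
    IsPartitionFun (spliceLe f g j) :=
  ⟨antitone_spliceLe hf hg.1 hj, let ⟨_, hN⟩ := hg.2; ⟨_, spliceLe_eq_zero hN⟩⟩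

lemma IsPartitionFun.spliceLt (hf : Antitone f) (hg : IsPartitionFun g)
    (hj : ∀ i < j, g (i + 2) ≤ f i) : IsPartitionFun (spliceLt f g j) :=
  ⟨antitone_spliceLt hf hg.1 hj, let ⟨_, hN⟩ := hg.2; ⟨_, spliceLt_eq_zero hN⟩⟩

lemma finsum_spliceLe (hg : ∀ i, N ≤ i → g i = 0) :
    ∑ᶠ i, spliceLe f g j i + ∑ i ∈ range j, g i = ∑ i ∈ range (j + 1), f i + ∑ᶠ i, g i := by
  have hhead : ∑ i ∈ range (j + 1), spliceLe f g j i = ∑ i ∈ range (j + 1), f i :=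
    sum_congr rfl fun i hi => if_pos (mem_range_succ_iff.1 hi)
  have htail : (fun i => spliceLe f g j (j + 1 + i)) = fun i => g (j + i) := funext fun i => by
    rw [spliceLe, if_neg (by omega)]
    congr 1
    omega
  rw [finsum_eq_sum_range_add_finsum (spliceLe_eq_zero hg) (j + 1),
    finsum_eq_sum_range_add_finsum hg j, hhead, htail]
  ac_rfl

lemma finsum_spliceLt (hg : ∀ i, N ≤ i → g i = 0) :
    ∑ᶠ i, spliceLt f g j i + ∑ i ∈ range (j + 1), g i = ∑ i ∈ range j, f i + ∑ᶠ i, g i := by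
  have hhead : ∑ i ∈ range j, spliceLt f g j i = ∑ i ∈ range j, f i :=
    sum_congr rfl fun i hi => if_pos (mem_range.1 hi)
  have htail : (fun i => spliceLt f g j (j + i)) = fun i => g (j + 1 + i) := funext fun i => by
    rw [spliceLt, if_neg (by omega)]
    congr 1
    omega
  rw [finsum_eq_sum_range_add_finsum (spliceLt_eq_zero hg) j,
    finsum_eq_sum_range_add_finsum hg (j + 1), hhead, htail]
  ac_rfl

end Splice

lemma sum_range_tsub_add_mul {f : ℕ → ℕ} {n c : ℕ} (h : ∀ i < n, c ≤ f i) :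
    ∑ i ∈ range n, (f i - c) + n * c = ∑ i ∈ range n, f i := by
  have := sum_add_card_nsmul (s := range n) (f := fun i => f i - c) (b := c)
  rw [card_range, smul_eq_mul] at this
  rw [this]
  exact sum_congr rfl fun i hi => Nat.sub_add_cancel (h i (mem_range.1 hi))

lemma sum_range_add_const (f : ℕ → ℕ) (n c : ℕ) :
    ∑ i ∈ range n, (f i + c) = ∑ i ∈ range n, f i + n * c := by
  rw [← sum_add_card_nsmul, card_range, smul_eq_mul]

def cross (p : (ℕ → ℕ) × (ℕ → ℕ)) (j : ℕ) : (ℕ → ℕ) × (ℕ → ℕ) :=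
  (spliceLe (fun i => p.2 i - 2) p.1 j, spliceLt (fun i => p.1 i + 2) p.2 j)

def uncross (q : (ℕ → ℕ) × (ℕ → ℕ)) (j : ℕ) : (ℕ → ℕ) × (ℕ → ℕ) :=
  (spliceLt (fun i => q.2 i - 2) q.1 j, spliceLe (fun i => q.1 i + 2) q.2 j)

section Cross

variable {p q : (ℕ → ℕ) × (ℕ → ℕ)} {i j N : ℕ}

lemma two_le_snd_of_isLeast (hν : Antitone p.2) (hj : IsLeast {i | p.1 i + 2 ≤ p.2 i} j)
    (hi : i ≤ j) : 2 ≤ p.2 i :=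
  (le_add_self.trans hj.1).trans (hν hi)

lemma add_two_lt_snd_of_isLeast (hj : IsLeast {i | q.2 i ≤ q.1 i + 2} j) (hi : i < j) :
    q.1 i + 2 < q.2 i :=
  not_le.1 fun h => hi.not_ge (hj.2 h)

lemma uncross_cross (h : ∀ i ≤ j, 2 ≤ p.2 i) : uncross (cross p j) j = p := by
  ext i <;> simp only [uncross, cross, spliceLe, spliceLt] <;> grind

lemma cross_uncross (h : ∀ i < j, 2 ≤ q.2 i) : cross (uncross q j) j = q := by
  ext i <;> simp only [uncross, cross, spliceLe, spliceLt] <;> grind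

lemma isLeast_cross (hν : Antitone p.2) (hj : IsLeast {i | p.1 i + 2 ≤ p.2 i} j) :
    IsLeast {i | (cross p j).2 i ≤ (cross p j).1 i + 2} j := by
  have hjmem : p.1 j + 2 ≤ p.2 j := hj.1
  refine ⟨?_, fun i hi => ?_⟩
  · simp only [Set.mem_ofPred_eq, cross, spliceLt, spliceLe, lt_irrefl, if_false, le_rfl,
      if_true]
    have := hν (Nat.le_add_right j 1)
    omega
  · by_contra! hij
    simp only [Set.mem_ofPred_eq, cross, spliceLt, spliceLe, if_pos hij, if_pos hij.le] at hi
    have := hν hij.le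
    exact hij.not_ge (hj.2 (show p.1 i + 2 ≤ p.2 i by omega))

lemma isLeast_uncross (hκ : Antitone q.1) (hj : IsLeast {i | q.2 i ≤ q.1 i + 2} j) :
    IsLeast {i | (uncross q j).1 i + 2 ≤ (uncross q j).2 i} j := by
  refine ⟨?_, fun i hi => ?_⟩
  · simp only [Set.mem_ofPred_eq, uncross, spliceLt, spliceLe, lt_irrefl, if_false, le_rfl,
      if_true]
    have := hκ (Nat.le_add_right j 1)
    omega
  · by_contra! hij
    simp only [Set.mem_ofPred_eq, uncross, spliceLt, spliceLe, if_pos hij, if_pos hij.le] at hi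
    exact hij.not_ge (hj.2 (show q.2 i ≤ q.1 i + 2 by omega))

lemma finsum_cross (h : ∀ i ≤ j, 2 ≤ p.2 i) (hμ : ∀ i, N ≤ i → p.1 i = 0)
    (hν : ∀ i, N ≤ i → p.2 i = 0) :
    ∑ᶠ i, (cross p j).1 i + ∑ᶠ i, (cross p j).2 i + 2 = ∑ᶠ i, p.1 i + ∑ᶠ i, p.2 i := by
  have h₁ := finsum_spliceLe (f := fun i => p.2 i - 2) (j := j) hμ
  have h₂ := finsum_spliceLt (f := fun i => p.1 i + 2) (j := j) hν
  have h₃ := sum_range_tsub_add_mul (f := p.2) (n := j + 1) (c := 2) fun i hi =>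
    h i (Nat.le_of_lt_succ hi)
  have h₄ := sum_range_add_const p.1 j 2
  simp only [cross]
  omega

lemma finsum_uncross (h : ∀ i < j, 2 ≤ q.2 i) (hκ : ∀ i, N ≤ i → q.1 i = 0)
    (hσ : ∀ i, N ≤ i → q.2 i = 0) :
    ∑ᶠ i, (uncross q j).1 i + ∑ᶠ i, (uncross q j).2 i = ∑ᶠ i, q.1 i + ∑ᶠ i, q.2 i + 2 := by
  have h₁ := finsum_spliceLt (f := fun i => q.2 i - 2) (j := j) hκ
  have h₂ := finsum_spliceLe (f := fun i => q.1 i + 2) (j := j) hσ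
  have h₃ := sum_range_tsub_add_mul (f := q.2) (n := j) (c := 2) h
  have h₄ := sum_range_add_const q.1 (j + 1) 2
  simp only [uncross]
  omega

end Cross

def IsPartitionPair (n : ℕ) (p : (ℕ → ℕ) × (ℕ → ℕ)) : Prop :=
  IsPartitionFun p.1 ∧ IsPartitionFun p.2 ∧ ∑ᶠ i, p.1 i + ∑ᶠ i, p.2 i = n

abbrev PartitionPair (n : ℕ) := {p : (ℕ → ℕ) × (ℕ → ℕ) // IsPartitionPair n p}

lemma numPartitionPairs_eq_card (n : ℕ) : numPartitionPairs n = Nat.card (PartitionPair n) := rfl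

namespace IsPartitionPair

variable {n : ℕ} {p q : (ℕ → ℕ) × (ℕ → ℕ)} {j : ℕ}

lemma apply_le (hp : IsPartitionPair n p) (i : ℕ) : p.1 i ≤ n ∧ p.2 i ≤ n :=
  ⟨(hp.1.le_finsum i).trans (hp.2.2 ▸ le_self_add),
    (hp.2.1.le_finsum i).trans (hp.2.2 ▸ le_add_self)⟩

lemma apply_eq_zero (hp : IsPartitionPair n p) {i : ℕ} (hi : n ≤ i) : p.1 i = 0 ∧ p.2 i = 0 :=
  ⟨hp.1.eq_zero_of_finsum_le (hp.2.2 ▸ le_self_add |>.trans hi),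
    hp.2.1.eq_zero_of_finsum_le (hp.2.2 ▸ le_add_self |>.trans hi)⟩

lemma cross {m : ℕ} (hp : IsPartitionPair (m + 2) p)
    (hj : IsLeast {i | p.1 i + 2 ≤ p.2 i} j) : IsPartitionPair m (cross p j) := by
  obtain ⟨⟨hμ, Nμ, hNμ⟩, ⟨hν, Nν, hNν⟩, hsize⟩ := hp
  have h2 : ∀ i ≤ j, 2 ≤ p.2 i := fun i hi => two_le_snd_of_isLeast hν hj hi
  have hmin : ∀ i < j, p.2 i < p.1 i + 2 := fun i hi => not_le.1 fun h => hi.not_ge (hj.2 h)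
  refine ⟨IsPartitionFun.spliceLe (fun a b hab => Nat.sub_le_sub_right (hν hab) 2)
      ⟨hμ, Nμ, hNμ⟩ (Nat.le_sub_of_add_le hj.1),
    IsPartitionFun.spliceLt (fun a b hab => Nat.add_le_add_right (hμ hab) 2) ⟨hν, Nν, hNν⟩
      fun i hi => (hν (Nat.le_add_right i 2)).trans (hmin i hi).le, ?_⟩
  have := finsum_cross (j := j) h2 (N := Nμ + Nν) (fun i hi => hNμ i (by omega))
    (fun i hi => hNν i (by omega))
  omega

lemma uncross {m : ℕ} (hq : IsPartitionPair m q) (hj : IsLeast {i | q.2 i ≤ q.1 i + 2} j) :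
    IsPartitionPair (m + 2) (uncross q j) := by
  obtain ⟨⟨hκ, Nκ, hNκ⟩, ⟨hσ, Nσ, hNσ⟩, hsize⟩ := hq
  have hmin : ∀ i < j, q.1 i + 2 < q.2 i := fun i hi => add_two_lt_snd_of_isLeast hj hi
  refine ⟨IsPartitionFun.spliceLt (fun a b hab => Nat.sub_le_sub_right (hσ hab) 2)
      ⟨hκ, Nκ, hNκ⟩ fun i hi =>
        (hκ (Nat.le_add_right i 2)).trans (Nat.le_sub_of_add_le (hmin i hi).le),
    IsPartitionFun.spliceLe (fun a b hab => Nat.add_le_add_right (hκ hab) 2) ⟨hσ, Nσ, hNσ⟩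
      hj.1, ?_⟩
  have := finsum_uncross (j := j) (fun i hi => le_add_self.trans (hmin i hi).le)
    (N := Nκ + Nσ) (fun i hi => hNκ i (by omega)) (fun i hi => hNσ i (by omega))
  omega

end IsPartitionPair

instance (n : ℕ) : Finite (PartitionPair n) := by
  let encode (p : PartitionPair n) (i : Fin n) : Fin (n + 1) × Fin (n + 1) :=
    (⟨p.1.1 i, Nat.lt_succ_of_le (p.2.apply_le i).1⟩,
      ⟨p.1.2 i, Nat.lt_succ_of_le (p.2.apply_le i).2⟩)
  refine Finite.of_injective encode fun p q hpq => Subtype.ext (Prod.ext ?_ ?_) <;>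
    funext i <;> by_cases hi : i < n
  · exact congrArg (fun x => (x.1 : ℕ)) (congrFun hpq ⟨i, hi⟩)
  · rw [(p.2.apply_eq_zero (not_lt.1 hi)).1, (q.2.apply_eq_zero (not_lt.1 hi)).1]
  · exact congrArg (fun x => (x.2 : ℕ)) (congrFun hpq ⟨i, hi⟩)
  · rw [(p.2.apply_eq_zero (not_lt.1 hi)).2, (q.2.apply_eq_zero (not_lt.1 hi)).2]

noncomputable def crossEquiv (m : ℕ) :
    {p : PartitionPair (m + 2) // ∃ i, p.1.1 i + 2 ≤ p.1.2 i} ≃ PartitionPair m where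
  toFun p := ⟨cross p.1.1 (Nat.find p.2), p.1.2.cross (Nat.isLeast_find p.2)⟩
  invFun q :=
    have hj := Nat.isLeast_find (q.2.2.1.exists_le_add q.1.1 2)
    ⟨⟨uncross q.1 _, q.2.uncross hj⟩, ⟨_, (isLeast_uncross q.2.1.1 hj).1⟩⟩
  left_inv p := by
    have hj := Nat.isLeast_find p.2
    refine Subtype.ext (Subtype.ext ?_)
    dsimp only
    rw [(Nat.isLeast_find _).unique (isLeast_cross p.1.2.2.1.1 hj)]
    exact uncross_cross fun i hi => two_le_snd_of_isLeast p.1.2.2.1.1 hj hi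
  right_inv q := by
    have hj := Nat.isLeast_find (q.2.2.1.exists_le_add q.1.1 2)
    refine Subtype.ext ?_
    dsimp only
    rw [(Nat.isLeast_find _).unique (isLeast_uncross q.2.1.1 hj)]
    exact cross_uncross fun i hi => le_add_self.trans (add_two_lt_snd_of_isLeast hj hi).le

lemma card_partitionPair (n : ℕ) :
    Nat.card (PartitionPair n) =
      Nat.card {p : PartitionPair n // ∀ i, p.1.2 i ≤ p.1.1 i + 1} +
        Nat.card {p : PartitionPair n // ∃ i, p.1.1 i + 2 ≤ p.1.2 i} := by
  classical
  rw [← Nat.card_sum]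
  refine Nat.card_congr
    ((Equiv.sumCongr (Equiv.refl _) (Equiv.subtypeEquivRight fun p => ?_)).trans
      (Equiv.sumCompl _)).symm
  simp only [not_forall, not_le]
  exact exists_congr fun i => Nat.lt_iff_add_one_le

lemma card_exists_add_two_le (n : ℕ) :
    Nat.card {p : PartitionPair n // ∃ i, p.1.1 i + 2 ≤ p.1.2 i} =
      if 2 ≤ n then numPartitionPairs (n - 2) else 0 := by
  split_ifs with hn
  · obtain ⟨m, rfl⟩ := Nat.exists_eq_add_of_le' hn
    exact Nat.card_congr (crossEquiv m)
  · have : IsEmpty {p : PartitionPair n // ∃ i, p.1.1 i + 2 ≤ p.1.2 i} :=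
      ⟨fun ⟨p, i, hi⟩ => hn (by have := (p.2.apply_le i).2; omega)⟩
    exact Nat.card_of_isEmpty

/-- the number of pairs of partitions `(μ,ν)` with `|μ| + |ν| = n` and
`νᵢ ≤ μᵢ + 1` for all `i` equals `p₂(n) − p₂(n−2)` (with `p₂` of a negative number
being `0`). -/
theorem card_partition_pairs_nu_le_mu_add_one (n : ℕ) :
    Nat.card {p : (ℕ → ℕ) × (ℕ → ℕ) //
        IsPartitionFun p.1 ∧ IsPartitionFun p.2 ∧
        (∑ᶠ i, p.1 i) + (∑ᶠ i, p.2 i) = n ∧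
        ∀ i, p.2 i ≤ p.1 i + 1} =
      numPartitionPairs n - (if 2 ≤ n then numPartitionPairs (n - 2) else 0) := by
  rw [← card_exists_add_two_le, numPartitionPairs_eq_card, card_partitionPair,
    Nat.add_sub_cancel]
  exact Nat.card_congr
    ((Equiv.subtypeEquivRight fun p => by simp only [IsPartitionPair, and_assoc]).trans
      (Equiv.subtypeSubtypeEquivSubtypeInter (IsPartitionPair n)
        fun p => ∀ i, p.2 i ≤ p.1 i + 1).symm)
end

section
/- Let k be a field of characteristic 2 and ξ ∈ o(2n+1,k)* nilpotent, with X_ξ defined as above. Writing X_ξ in block form [[0, x₁ᵗ, 0],[x₁, x₂+x₂ᵗ, γ],[0, γᵗ, 0]] with x₁, x₂ strictly upper triangular n×n matrices, let m be minimal with x₁^m γ = 0. Then the vectors v₀ = (x₁^{m−1}γ, 0, 0)ᵗ, …, v_{m−1} = (γ,0,0)ᵗ, v_m = (0,0,1)ᵗ satisfy (X_ξ + λS)Σ v_i λ^i = 0, β(v_i,v_j) = β_ξ(v_i,v_j) = 0 for all i,j, α(v_i) = 0 for i < m, and α(v_m) = 1. -/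
open Matrix

/-- `S = [[0,I,0],[I,0,0],[0,0,0]]`. -/
def oddS (k : Type*) [Field k] (n : ℕ) :
    Matrix (Fin n ⊕ (Fin n ⊕ Unit)) (Fin n ⊕ (Fin n ⊕ Unit)) k :=
  Matrix.of fun i j =>
    match i, j with
    | Sum.inl a, Sum.inr (Sum.inl b) => if a = b then 1 else 0
    | Sum.inr (Sum.inl a), Sum.inl b => if a = b then 1 else 0
    | _, _ => 0

/-- `B = [[0,I,0],[0,0,0],[0,0,1]]`, the matrix of the quadratic form `α(v) = vᵀBv`. -/
def oddB (k : Type*) [Field k] (n : ℕ) :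
    Matrix (Fin n ⊕ (Fin n ⊕ Unit)) (Fin n ⊕ (Fin n ⊕ Unit)) k :=
  Matrix.of fun i j =>
    match i, j with
    | Sum.inl a, Sum.inr (Sum.inl b) => if a = b then 1 else 0
    | Sum.inr (Sum.inr _), Sum.inr (Sum.inr _) => 1
    | _, _ => 0

/-- `X_ξ = [[0, x₁ᵀ, 0],[x₁, x₂+x₂ᵀ, γ],[0, γᵀ, 0]]`. -/
def oddX {k : Type*} [Field k] {n : ℕ}
    (x₁ x₂ : Matrix (Fin n) (Fin n) k) (γ : Fin n → k) :
    Matrix (Fin n ⊕ (Fin n ⊕ Unit)) (Fin n ⊕ (Fin n ⊕ Unit)) k :=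
  Matrix.of fun i j =>
    match i, j with
    | Sum.inl a, Sum.inr (Sum.inl b) => x₁ b a
    | Sum.inr (Sum.inl a), Sum.inl b => x₁ a b
    | Sum.inr (Sum.inl a), Sum.inr (Sum.inl b) => x₂ a b + x₂ b a
    | Sum.inr (Sum.inl a), Sum.inr (Sum.inr _) => γ a
    | Sum.inr (Sum.inr _), Sum.inr (Sum.inl b) => γ b
    | _, _ => 0

/-- The vectors `vᵢ = (x₁^{m-1-i}γ, 0, 0)` for `i < m` and `v_m = (0,0,1)`. -/
def oddV {k : Type*} [Field k] {n : ℕ}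
    (x₁ : Matrix (Fin n) (Fin n) k) (γ : Fin n → k) (m : ℕ) (i : ℕ) :
    Fin n ⊕ (Fin n ⊕ Unit) → k :=
  if i = m then Sum.elim 0 (Sum.elim 0 1)
  else Sum.elim ((x₁ ^ (m - 1 - i)).mulVec γ) 0


section Helpers
variable {k : Type*} [Field k] {n : ℕ}

/-- vector supported on the first block -/
def lVec (w : Fin n → k) : Fin n ⊕ (Fin n ⊕ Unit) → k := Sum.elim w 0

/-- vector supported on the middle block -/
def mVec (u : Fin n → k) : Fin n ⊕ (Fin n ⊕ Unit) → k := Sum.elim 0 (Sum.elim u 0)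

/-- the vector (0,0,1) -/
def eVec (k : Type*) [Field k] (n : ℕ) : Fin n ⊕ (Fin n ⊕ Unit) → k :=
  Sum.elim 0 (Sum.elim 0 1)

lemma oddV_eq_of_lt (x₁ : Matrix (Fin n) (Fin n) k) (γ : Fin n → k) {m i : ℕ}
    (h : ¬ i = m) : oddV x₁ γ m i = lVec ((x₁ ^ (m - 1 - i)).mulVec γ) := by
  rw [oddV, if_neg h]; rfl

lemma oddV_eq_last (x₁ : Matrix (Fin n) (Fin n) k) (γ : Fin n → k) {m : ℕ} :
    oddV x₁ γ m m = eVec k n := by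
  rw [oddV, if_pos rfl]; rfl

lemma oddX_mulVec_left (x₁ x₂ : Matrix (Fin n) (Fin n) k) (γ : Fin n → k) (w : Fin n → k) :
    (oddX x₁ x₂ γ).mulVec (lVec w) = mVec (x₁.mulVec w) := by
  funext i
  rcases i with a | a | a <;>
    simp [oddX, lVec, mVec, mulVec, dotProduct, Fintype.sum_sum_type]

lemma oddX_mulVec_last (x₁ x₂ : Matrix (Fin n) (Fin n) k) (γ : Fin n → k) :
    (oddX x₁ x₂ γ).mulVec (eVec k n) = mVec γ := by
  funext i
  rcases i with a | a | a <;>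
    simp [oddX, eVec, mVec, mulVec, dotProduct, Fintype.sum_sum_type]

lemma oddS_mulVec_left (w : Fin n → k) :
    (oddS k n).mulVec (lVec w) = mVec w := by
  funext i
  rcases i with a | a | a <;>
    simp [oddS, lVec, mVec, mulVec, dotProduct, Fintype.sum_sum_type]

lemma oddS_mulVec_last : (oddS k n).mulVec (eVec k n) = 0 := by
  funext i
  rcases i with a | a | a <;>
    simp [oddS, eVec, mulVec, dotProduct, Fintype.sum_sum_type]

lemma oddB_mulVec_left (w : Fin n → k) : (oddB k n).mulVec (lVec w) = 0 := by
  funext i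
  rcases i with a | a | a <;>
    simp [oddB, lVec, mulVec, dotProduct, Fintype.sum_sum_type]

lemma oddB_mulVec_last : (oddB k n).mulVec (eVec k n) = eVec k n := by
  funext i
  rcases i with a | a | a <;>
    simp [oddB, eVec, mulVec, dotProduct, Fintype.sum_sum_type]

lemma lVec_dot_mVec (w u : Fin n → k) : lVec w ⬝ᵥ mVec u = 0 := by
  simp [lVec, mVec, dotProduct, Fintype.sum_sum_type]

lemma eVec_dot_mVec (u : Fin n → k) : eVec k n ⬝ᵥ mVec u = 0 := by
  simp [eVec, mVec, dotProduct, Fintype.sum_sum_type]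

lemma eVec_dot_eVec : eVec k n ⬝ᵥ eVec k n = 1 := by
  simp [eVec, dotProduct, Fintype.sum_sum_type]

lemma mVec_add (u v : Fin n → k) : mVec u + mVec v = mVec (u + v) := by
  funext i; rcases i with a | a | a <;> simp [mVec]

lemma mVec_zero (u : Fin n → k) (h : u = 0) : mVec u = 0 := by
  subst h; funext i; rcases i with a | a | a <;> simp [mVec]

end Helpers

/-- with `x₁, x₂` strictly upper triangular and `m` minimal with
`x₁^m γ = 0`, the vectors `v₀,…,v_m` solve `(X_ξ + λS)Σvᵢλⁱ = 0`, are isotropic for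
`β` and `β_ξ`, satisfy `α(vᵢ) = 0` for `i < m`, and `α(v_m) = 1`. -/
theorem odd_orthogonal_v_chain
    {k : Type*} [Field k] [CharP k 2] (n : ℕ)
    (x₁ x₂ : Matrix (Fin n) (Fin n) k) (γ : Fin n → k)
    (hx₁ : ∀ i j : Fin n, j ≤ i → x₁ i j = 0)
    (hx₂ : ∀ i j : Fin n, j ≤ i → x₂ i j = 0)
    (m : ℕ) (hm : (x₁ ^ m).mulVec γ = 0) (hmin : ∀ j < m, (x₁ ^ j).mulVec γ ≠ 0) :
    (oddX x₁ x₂ γ).mulVec (oddV x₁ γ m 0) = 0 ∧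
    (oddS k n).mulVec (oddV x₁ γ m m) = 0 ∧
    (∀ i < m, (oddX x₁ x₂ γ).mulVec (oddV x₁ γ m (i + 1)) +
      (oddS k n).mulVec (oddV x₁ γ m i) = 0) ∧
    (∀ i ≤ m, ∀ j ≤ m,
      (oddV x₁ γ m i) ⬝ᵥ ((oddS k n).mulVec (oddV x₁ γ m j)) = 0 ∧
      (oddV x₁ γ m i) ⬝ᵥ ((oddX x₁ x₂ γ).mulVec (oddV x₁ γ m j)) = 0) ∧
    (∀ i < m, (oddV x₁ γ m i) ⬝ᵥ ((oddB k n).mulVec (oddV x₁ γ m i)) = 0) ∧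
    (oddV x₁ γ m m) ⬝ᵥ ((oddB k n).mulVec (oddV x₁ γ m m)) = 1 := by
  have hchar : ∀ a : k, a + a = 0 := fun a => by
    have h2 : (2 : k) = 0 := by exact_mod_cast CharP.cast_eq_zero k 2
    calc a + a = 2 * a := by ring
    _ = 0 := by rw [h2, zero_mul]
  constructor
  · -- X v₀ = 0
    by_cases h0 : (0 : ℕ) = m
    · have hγ : γ = 0 := by
        have := hm; rw [← h0] at this; simpa using this
      rw [← h0, oddV_eq_last, oddX_mulVec_last]
      exact mVec_zero _ hγ
    · rw [oddV_eq_of_lt _ _ h0, oddX_mulVec_left, Matrix.mulVec_mulVec, ← pow_succ']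
      have hm1 : m - 1 - 0 + 1 = m := by omega
      rw [hm1]
      exact mVec_zero _ hm
  refine ⟨?_, ?_, ?_, ?_, ?_⟩
  · rw [oddV_eq_last, oddS_mulVec_last]
  · intro i hi
    have hne : ¬ i = m := by omega
    by_cases h1 : i + 1 = m
    · rw [h1, oddV_eq_last, oddV_eq_of_lt _ _ hne, oddX_mulVec_last, oddS_mulVec_left,
        mVec_add]
      refine mVec_zero _ ?_
      have : m - 1 - i = 0 := by omega
      rw [this, pow_zero, Matrix.one_mulVec]
      funext a; exact hchar (γ a)
    · rw [oddV_eq_of_lt _ _ h1, oddV_eq_of_lt _ _ hne, oddX_mulVec_left, oddS_mulVec_left,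
        mVec_add, Matrix.mulVec_mulVec, ← pow_succ']
      refine mVec_zero _ ?_
      have : m - 1 - (i + 1) + 1 = m - 1 - i := by omega
      rw [this]
      funext a; exact hchar _
  · intro i hi j hj
    constructor
    · by_cases hjm : j = m
      · rw [hjm, oddV_eq_last, oddS_mulVec_last, dotProduct_zero]
      · rw [oddV_eq_of_lt _ _ hjm, oddS_mulVec_left]
        by_cases him : i = m
        · rw [him, oddV_eq_last, eVec_dot_mVec]
        · rw [oddV_eq_of_lt _ _ him, lVec_dot_mVec]
    · by_cases hjm : j = m
      · rw [hjm, oddV_eq_last, oddX_mulVec_last]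
        by_cases him : i = m
        · rw [him, oddV_eq_last, eVec_dot_mVec]
        · rw [oddV_eq_of_lt _ _ him, lVec_dot_mVec]
      · rw [oddV_eq_of_lt _ _ hjm, oddX_mulVec_left]
        by_cases him : i = m
        · rw [him, oddV_eq_last, eVec_dot_mVec]
        · rw [oddV_eq_of_lt _ _ him, lVec_dot_mVec]
  · intro i hi
    rw [oddV_eq_of_lt _ _ (by omega : ¬ i = m), oddB_mulVec_left, dotProduct_zero]
  · rw [oddV_eq_last, oddB_mulVec_last, eVec_dot_eVec]
end

section
/- Let k be a field of characteristic 2, V = k^{2n} with non-degenerate bilinear form β(v,w) = vᵗSw, S = [[0,I],[I,0]], G = O(2n,k), and g = o(2n) = {x : β(xv,v) = 0 ∀v}. The bilinear form on Λ²V defined by ⟨a∧b, c∧d⟩ = det [[β(a,c), β(a,d)],[β(b,c), β(b,d)]] is G-invariant and non-degenerate, and the linear map φ: Λ²V → o(V) sending a∧b to the operator v ↦ β(a,v)b + β(b,v)a is a G-equivariant linear isomorphism. Consequently o(2n) carries a G-invariant non-degenerate bilinear form. -/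
/-!
For `x ∈ o(S)` the bilinear form `(v, w) ↦ β(x v, w)` is alternating. Writing `eᵢ` for the
standard basis and `fᵢ = S⁻¹ eᵢ` for its β-dual basis, this gives
`x = ∑_{i<j} β(x eᵢ, eⱼ) φ_{fᵢ∧fⱼ}`, so the `φ_{a∧b}` span `o(S)`. The form
`⟨x, y⟩ = ∑_{i<j} β(x eᵢ, eⱼ) (y fᵢ)ⱼ` pairs the alternating form of `x` with the Plücker
coordinates of `y`, and satisfies `⟨x, φ_{c∧d}⟩ = β(x c, d)` for `x ∈ o(S)`. This yields the
determinant formula on the `φ_{a∧b}` and nondegeneracy from that of β. Since β is the polarization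
of α, every `g ∈ O(2n)` preserves β; hence `φ` is `G`-equivariant, and invariance of `⟨,⟩`
reduces to the spanning set, where its values are expressed through β alone.
-/

open Matrix

/-- The operator `φ_{a∧b} : v ↦ β(a,v)b + β(b,v)a` associated to the bilinear form with
matrix `S`. -/
noncomputable def phiWedge {k : Type*} [Field k] {ι : Type*} [Fintype ι] [DecidableEq ι]
    (S : Matrix ι ι k) (a b : ι → k) : Module.End k (ι → k) :=
  (((Matrix.toLinearMap₂' k) S) a).smulRight b + (((Matrix.toLinearMap₂' k) S) b).smulRight a

theorem Finset.sum_lt_add_swap {ι M : Type*} [Fintype ι] [LinearOrder ι] [AddCommMonoid M]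
    (f : ι → ι → M) (hf : ∀ i, f i i = 0) :
    ∑ p : ι × ι with p.1 < p.2, (f p.1 p.2 + f p.2 p.1) = ∑ i, ∑ j, f i j := by
  have hswap : ∑ p : ι × ι with p.1 < p.2, f p.2 p.1 = ∑ p : ι × ι with p.2 < p.1, f p.1 p.2 :=
    Finset.sum_equiv (Equiv.prodComm ι ι) (by simp) (by simp)
  rw [Finset.sum_add_distrib, hswap, Finset.sum_filter, Finset.sum_filter,
    ← Finset.sum_add_distrib, ← Fintype.sum_prod_type']
  refine Finset.sum_congr rfl fun p _ => ?_
  rcases lt_trichotomy p.1 p.2 with h | h | h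
  · simp [h, h.not_gt]
  · simp [h, hf]
  · simp [h, h.not_gt]

theorem LinearMap.IsAlt.sum_lt_mul_sub {ι R : Type*} [Fintype ι] [DecidableEq ι] [LinearOrder ι]
    [CommRing R] {f : (ι → R) →ₗ[R] (ι → R) →ₗ[R] R} (hf : f.IsAlt) (c d : ι → R) :
    ∑ p : ι × ι with p.1 < p.2,
      f (Pi.single p.1 1) (Pi.single p.2 1) * (c p.1 * d p.2 - c p.2 * d p.1) = f c d := by
  have hsummand : ∀ i j, f (Pi.single i 1) (Pi.single j 1) * (c i * d j - c j * d i) =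
      c i * d j * f (Pi.single i 1) (Pi.single j 1) +
        c j * d i * f (Pi.single j 1) (Pi.single i 1) := by
    intro i j
    rw [← hf.neg]
    ring
  simp only [hsummand]
  rw [Finset.sum_lt_add_swap (fun i j => c i * d j * f (Pi.single i 1) (Pi.single j 1))
      (fun i => by rw [hf.self_eq_zero, mul_zero]),
    ← Matrix.toLinearMap₂'_toMatrix' (R := R) f, Matrix.toLinearMap₂'_apply]
  simp [LinearMap.toMatrix₂'_apply, mul_assoc]

theorem LinearMap.eqOn_span₂ {R M N P : Type*} [CommSemiring R] [AddCommMonoid M] [Module R M]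
    [AddCommMonoid N] [Module R N] [AddCommMonoid P] [Module R P] {f f' : M →ₗ[R] N →ₗ[R] P}
    {s : Set M} {t : Set N} (h : ∀ x ∈ s, ∀ y ∈ t, f x y = f' x y) {x : M} {y : N}
    (hx : x ∈ Submodule.span R s) (hy : y ∈ Submodule.span R t) : f x y = f' x y :=
  Submodule.span_induction₂ (p := fun x y _ _ => f x y = f' x y) (fun x y hx hy => h x hx y hy)
    (by simp) (by simp) (by intros; simp_all) (by intros; simp_all) (by intros; simp_all)
    (by intros; simp_all) hx hy

namespace Matrix

variable {ι R : Type*} [Fintype ι] [CommRing R]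

theorem add_transpose_eq_of_forall_dotProduct_mulVec_self [DecidableEq ι] {M N : Matrix ι ι R}
    (h : ∀ v, v ⬝ᵥ M *ᵥ v = v ⬝ᵥ N *ᵥ v) : M + Mᵀ = N + Nᵀ := by
  ext i j
  have hij := h (Pi.single i 1 + Pi.single j 1)
  have hii := h (Pi.single i 1)
  have hjj := h (Pi.single j 1)
  simp only [mulVec_add, dotProduct_add, add_dotProduct, mulVec_single_one,
    single_one_dotProduct, col_apply] at hij hii hjj
  simp only [add_apply, transpose_apply]
  linear_combination hij - hii - hjj

theorem dotProduct_transpose_mul_mul_mulVec (A g : Matrix ι ι R) (v w : ι → R) :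
    v ⬝ᵥ (gᵀ * A * g) *ᵥ w = g *ᵥ v ⬝ᵥ A *ᵥ (g *ᵥ w) := by
  rw [← mulVec_mulVec, ← mulVec_mulVec, dotProduct_mulVec, vecMul_transpose]

end Matrix

section

variable {k : Type*} [Field k] {ι : Type*} [Fintype ι]

def orthogonalAlgebra (S : Matrix ι ι k) : Submodule k (Module.End k (ι → k)) where
  carrier := {x | ∀ v, x v ⬝ᵥ S *ᵥ v = 0}
  add_mem' hx hy v := by simp [add_dotProduct, hx v, hy v]
  zero_mem' v := by simp
  smul_mem' c x hx v := by simp [smul_dotProduct, hx v]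

variable [DecidableEq ι] {S : Matrix ι ι k}

theorem isAlt_comp_of_mem_orthogonalAlgebra {x : Module.End k (ι → k)}
    (hx : x ∈ orthogonalAlgebra S) : (toLinearMap₂' k S ∘ₗ x).IsAlt := fun v => by
  simpa [toLinearMap₂'_apply'] using hx v

theorem sum_lt_mul_add_eq_of_mem_orthogonalAlgebra [CharP k 2] [LinearOrder ι]
    {x : Module.End k (ι → k)} (hx : x ∈ orthogonalAlgebra S) (c d : ι → k) :
    ∑ p : ι × ι with p.1 < p.2,
      x (Pi.single p.1 1) ⬝ᵥ S *ᵥ Pi.single p.2 1 * (c p.1 * d p.2 + c p.2 * d p.1) =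
        x c ⬝ᵥ S *ᵥ d := by
  simpa [toLinearMap₂'_apply', CharTwo.sub_eq_add] using
    (isAlt_comp_of_mem_orthogonalAlgebra hx).sum_lt_mul_sub c d

theorem dotProduct_mulVec_col_nonsing_inv (hS : S.det ≠ 0) (c : ι → k) (i : ι) :
    c ⬝ᵥ S *ᵥ S⁻¹.col i = c i := by
  rw [← mulVec_single_one, mulVec_mulVec, mul_nonsing_inv S (isUnit_iff_ne_zero.mpr hS),
    one_mulVec, dotProduct_single_one]

theorem eq_of_forall_dotProduct_mulVec_eq (hS : S.det ≠ 0) {u u' : ι → k}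
    (h : ∀ w, u ⬝ᵥ S *ᵥ w = u' ⬝ᵥ S *ᵥ w) : u = u' :=
  sub_eq_zero.mp <| separatingLeft_def.mp (nondegenerate_of_det_ne_zero hS).separatingLeft _
    fun w => by rw [sub_dotProduct, h, sub_self]

theorem phiWedge_apply (S : Matrix ι ι k) (a b v : ι → k) :
    phiWedge S a b v = (a ⬝ᵥ S *ᵥ v) • b + (b ⬝ᵥ S *ᵥ v) • a := by
  simp [phiWedge, toLinearMap₂'_apply']

theorem phiWedge_mem_orthogonalAlgebra [CharP k 2] (S : Matrix ι ι k) (a b : ι → k) :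
    phiWedge S a b ∈ orthogonalAlgebra S := fun v => by
  rw [phiWedge_apply, add_dotProduct, smul_dotProduct, smul_dotProduct, smul_eq_mul, smul_eq_mul,
    mul_comm, CharTwo.add_self_eq_zero]

theorem eq_sum_smul_phiWedge [CharP k 2] [LinearOrder ι] (hSs : S.IsSymm) (hS : S.det ≠ 0)
    {x : Module.End k (ι → k)} (hx : x ∈ orthogonalAlgebra S) :
    x = ∑ p : ι × ι with p.1 < p.2, (x (Pi.single p.1 1) ⬝ᵥ S *ᵥ Pi.single p.2 1) •
      phiWedge S (S⁻¹.col p.1) (S⁻¹.col p.2) := by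
  have hdual : ∀ i v, S⁻¹.col i ⬝ᵥ S *ᵥ v = v i := fun i v => by
    rw [dotProduct_mulVec, ← mulVec_transpose, hSs.eq, dotProduct_comm,
      dotProduct_mulVec_col_nonsing_inv hS]
  refine LinearMap.ext fun v => eq_of_forall_dotProduct_mulVec_eq hS fun w => ?_
  rw [← sum_lt_mul_add_eq_of_mem_orthogonalAlgebra hx v w]
  simp only [LinearMap.sum_apply, LinearMap.smul_apply, sum_dotProduct, smul_dotProduct,
    phiWedge_apply, add_dotProduct, hdual, smul_eq_mul, mul_add]

theorem orthogonalAlgebra_eq_span [CharP k 2] (hSs : S.IsSymm) (hS : S.det ≠ 0) :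
    orthogonalAlgebra S = Submodule.span k {e | ∃ a b, e = phiWedge S a b} := by
  let _ : LinearOrder ι := LinearOrder.lift' _ (Fintype.equivFin ι).injective
  refine le_antisymm (fun x hx => ?_) (Submodule.span_le.mpr ?_)
  · rw [eq_sum_smul_phiWedge hSs hS hx]
    exact Submodule.sum_mem _ fun p _ => Submodule.smul_mem _ _ (Submodule.subset_span ⟨_, _, rfl⟩)
  · rintro _ ⟨a, b, rfl⟩
    exact phiWedge_mem_orthogonalAlgebra S a b

theorem transpose_mul_add_transpose_mul_eq {B g : Matrix ι ι k}
    (hg : ∀ v, g *ᵥ v ⬝ᵥ B *ᵥ (g *ᵥ v) = v ⬝ᵥ B *ᵥ v) : gᵀ * (B + Bᵀ) * g = B + Bᵀ := by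
  have h := add_transpose_eq_of_forall_dotProduct_mulVec_self (M := gᵀ * B * g) (N := B)
    (fun v => by rw [dotProduct_transpose_mul_mul_mulVec, hg])
  calc gᵀ * (B + Bᵀ) * g = gᵀ * B * g + (gᵀ * B * g)ᵀ := by
        simp only [transpose_mul, transpose_transpose, Matrix.mul_add, Matrix.add_mul,
          Matrix.mul_assoc]
    _ = B + Bᵀ := h

theorem isUnit_det_of_transpose_mul_mul_eq {g : Matrix ι ι k} (hS : S.det ≠ 0)
    (hg : gᵀ * S * g = S) : IsUnit g.det := by
  have h := congrArg det hg
  rw [det_mul, det_mul, det_transpose] at h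
  refine isUnit_iff_ne_zero.mpr fun h0 => hS ?_
  rw [← h, h0]
  ring

theorem phiWedge_mulVec_mulVec {g : Matrix ι ι k} (hg : gᵀ * S * g = S) (hgdet : IsUnit g.det)
    (a b : ι → k) :
    phiWedge S (g *ᵥ a) (g *ᵥ b) = g.mulVecLin ∘ₗ phiWedge S a b ∘ₗ (g⁻¹).mulVecLin := by
  refine LinearMap.ext fun v => ?_
  have hβ : ∀ c, g *ᵥ c ⬝ᵥ S *ᵥ v = c ⬝ᵥ S *ᵥ (g⁻¹ *ᵥ v) := fun c => by
    have h := dotProduct_transpose_mul_mul_mulVec S g c (g⁻¹ *ᵥ v)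
    rw [hg] at h
    rw [h, mulVec_mulVec v g, mul_nonsing_inv g hgdet, one_mulVec]
  simp [phiWedge_apply, hβ, mulVec_add, mulVec_smul]

noncomputable def wedgeForm [LinearOrder ι] (S : Matrix ι ι k) :
    Module.End k (ι → k) →ₗ[k] Module.End k (ι → k) →ₗ[k] k :=
  LinearMap.mk₂ k (fun x y => ∑ p : ι × ι with p.1 < p.2,
      x (Pi.single p.1 1) ⬝ᵥ S *ᵥ Pi.single p.2 1 * y (S⁻¹.col p.1) p.2)
    (fun x x' y => by simp [add_dotProduct, add_mul, Finset.sum_add_distrib])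
    (fun c x y => by simp [smul_dotProduct, Finset.mul_sum, mul_assoc])
    (fun x y y' => by simp [mul_add, Finset.sum_add_distrib])
    (fun c x y => by simp [Finset.mul_sum, mul_left_comm])

theorem wedgeForm_apply [LinearOrder ι] (S : Matrix ι ι k) (x y : Module.End k (ι → k)) :
    wedgeForm S x y = ∑ p : ι × ι with p.1 < p.2,
      x (Pi.single p.1 1) ⬝ᵥ S *ᵥ Pi.single p.2 1 * y (S⁻¹.col p.1) p.2 :=
  rfl

variable [CharP k 2] [LinearOrder ι]

theorem wedgeForm_phiWedge (hS : S.det ≠ 0) {x : Module.End k (ι → k)}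
    (hx : x ∈ orthogonalAlgebra S) (c d : ι → k) :
    wedgeForm S x (phiWedge S c d) = x c ⬝ᵥ S *ᵥ d := by
  rw [wedgeForm_apply, ← sum_lt_mul_add_eq_of_mem_orthogonalAlgebra hx c d]
  refine Finset.sum_congr rfl fun p _ => ?_
  simp only [phiWedge_apply, dotProduct_mulVec_col_nonsing_inv hS, Pi.add_apply, Pi.smul_apply,
    smul_eq_mul]
  ring

theorem wedgeForm_phiWedge_phiWedge (hS : S.det ≠ 0) (a b c d : ι → k) :
    wedgeForm S (phiWedge S a b) (phiWedge S c d) =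
      (a ⬝ᵥ S *ᵥ c) * (b ⬝ᵥ S *ᵥ d) + (a ⬝ᵥ S *ᵥ d) * (b ⬝ᵥ S *ᵥ c) := by
  rw [wedgeForm_phiWedge hS (phiWedge_mem_orthogonalAlgebra S a b), phiWedge_apply]
  simp only [add_dotProduct, smul_dotProduct, smul_eq_mul]
  ring

theorem eq_zero_of_forall_wedgeForm_eq_zero (hS : S.det ≠ 0) {x : Module.End k (ι → k)}
    (hx : x ∈ orthogonalAlgebra S) (h : ∀ y ∈ orthogonalAlgebra S, wedgeForm S x y = 0) :
    x = 0 := by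
  refine LinearMap.ext fun c => eq_of_forall_dotProduct_mulVec_eq hS fun d => ?_
  rw [← wedgeForm_phiWedge hS hx, h _ (phiWedge_mem_orthogonalAlgebra S c d)]
  simp

theorem wedgeForm_conj (hSs : S.IsSymm) (hS : S.det ≠ 0) {g : Matrix ι ι k}
    (hg : gᵀ * S * g = S) (hgdet : IsUnit g.det) {x y : Module.End k (ι → k)}
    (hx : x ∈ orthogonalAlgebra S) (hy : y ∈ orthogonalAlgebra S) :
    wedgeForm S (g.mulVecLin ∘ₗ x ∘ₗ (g⁻¹).mulVecLin) (g.mulVecLin ∘ₗ y ∘ₗ (g⁻¹).mulVecLin) =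
      wedgeForm S x y := by
  rw [orthogonalAlgebra_eq_span hSs hS] at hx hy
  have hβ : ∀ u v, g *ᵥ u ⬝ᵥ S *ᵥ (g *ᵥ v) = u ⬝ᵥ S *ᵥ v := fun u v => by
    rw [← dotProduct_transpose_mul_mul_mulVec, hg]
  let conj : Module.End k (ι → k) →ₗ[k] Module.End k (ι → k) :=
    LinearMap.mulLeft k g.mulVecLin ∘ₗ LinearMap.mulRight k (g⁻¹).mulVecLin
  refine LinearMap.eqOn_span₂ (f := (wedgeForm S).compl₁₂ conj conj) ?_ hx hy
  rintro _ ⟨a, b, rfl⟩ _ ⟨c, d, rfl⟩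
  change wedgeForm S (g.mulVecLin ∘ₗ _ ∘ₗ _) (g.mulVecLin ∘ₗ _ ∘ₗ _) = _
  rw [← phiWedge_mulVec_mulVec hg hgdet, ← phiWedge_mulVec_mulVec hg hgdet,
    wedgeForm_phiWedge_phiWedge hS, wedgeForm_phiWedge_phiWedge hS, hβ, hβ, hβ, hβ]

end

/-- characteristic 2, `V = k^{2n}`, `β(v,w) = vᵀSw` with `S=[[0,I],[I,0]]`,
quadratic form `α(v) = vᵀBv` with `B=[[0,I],[0,0]]`, `G = O(2n) = {g : α(gv)=α(v)}`,
`o(2n) = {x : β(xv,v)=0}`.  Then (i) each `φ_{a∧b}` lies in `o(2n)`; (ii) `φ` is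
`G`-equivariant: `φ_{ga∧gb} = g φ_{a∧b} g⁻¹`; (iii) the `φ_{a∧b}` span exactly `o(2n)`;
(iv) there is a bilinear form `⟨,⟩` on operators with
`⟨φ_{a∧b},φ_{c∧d}⟩ = det [[β(a,c),β(a,d)],[β(b,c),β(b,d)]]`, which is `G`-invariant and
non-degenerate on `o(2n)`; consequently `o(2n)` carries a `G`-invariant non-degenerate
bilinear form. -/
theorem even_orthogonal_invariant_form
    {k : Type*} [Field k] [CharP k 2] (n : ℕ)
    (S B : Matrix (Fin n ⊕ Fin n) (Fin n ⊕ Fin n) k)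
    (hS : S = Matrix.fromBlocks 0 1 1 0)
    (hB : B = Matrix.fromBlocks 0 1 0 0) :
    (∀ a b v, (phiWedge S a b v) ⬝ᵥ (S.mulVec v) = 0) ∧
    (∀ g : Matrix (Fin n ⊕ Fin n) (Fin n ⊕ Fin n) k,
      (∀ v, (g.mulVec v) ⬝ᵥ (B.mulVec (g.mulVec v)) = v ⬝ᵥ (B.mulVec v)) →
      ∀ a b, phiWedge S (g.mulVec a) (g.mulVec b) =
        g.mulVecLin ∘ₗ phiWedge S a b ∘ₗ (g⁻¹).mulVecLin) ∧
    (∀ x : Module.End k (Fin n ⊕ Fin n → k),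
      (∀ v, (x v) ⬝ᵥ (S.mulVec v) = 0) ↔
      x ∈ Submodule.span k {e | ∃ a b, e = phiWedge S a b}) ∧
    (∃ Bf : Module.End k (Fin n ⊕ Fin n → k) →ₗ[k]
        Module.End k (Fin n ⊕ Fin n → k) →ₗ[k] k,
      (∀ a b c d, Bf (phiWedge S a b) (phiWedge S c d) =
        (a ⬝ᵥ S.mulVec c) * (b ⬝ᵥ S.mulVec d) + (a ⬝ᵥ S.mulVec d) * (b ⬝ᵥ S.mulVec c)) ∧
      (∀ g : Matrix (Fin n ⊕ Fin n) (Fin n ⊕ Fin n) k,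
        (∀ v, (g.mulVec v) ⬝ᵥ (B.mulVec (g.mulVec v)) = v ⬝ᵥ (B.mulVec v)) →
        ∀ x y : Module.End k (Fin n ⊕ Fin n → k),
          (∀ v, (x v) ⬝ᵥ (S.mulVec v) = 0) → (∀ v, (y v) ⬝ᵥ (S.mulVec v) = 0) →
          Bf (g.mulVecLin ∘ₗ x ∘ₗ (g⁻¹).mulVecLin) (g.mulVecLin ∘ₗ y ∘ₗ (g⁻¹).mulVecLin)
            = Bf x y) ∧
      (∀ x : Module.End k (Fin n ⊕ Fin n → k), (∀ v, (x v) ⬝ᵥ (S.mulVec v) = 0) →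
        (∀ y : Module.End k (Fin n ⊕ Fin n → k),
          (∀ v, (y v) ⬝ᵥ (S.mulVec v) = 0) → Bf x y = 0) → x = 0)) := by
  let _ : LinearOrder (Fin n ⊕ Fin n) := inferInstanceAs (LinearOrder (Fin n ⊕ₗ Fin n))
  have hSs : S.IsSymm := by simp [hS, IsSymm, fromBlocks_transpose]
  have hSdet : S.det ≠ 0 := (isUnit_det_of_left_inverse (B := S) (by
    simp [hS, fromBlocks_multiply, fromBlocks_one])).ne_zero
  have hBS : B + Bᵀ = S := by simp [hB, hS, fromBlocks_transpose, fromBlocks_add]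
  have hO : ∀ g : Matrix (Fin n ⊕ Fin n) (Fin n ⊕ Fin n) k,
      (∀ v, g *ᵥ v ⬝ᵥ B *ᵥ (g *ᵥ v) = v ⬝ᵥ B *ᵥ v) → gᵀ * S * g = S ∧ IsUnit g.det := by
    intro g hg
    have hgS : gᵀ * S * g = S := hBS ▸ transpose_mul_add_transpose_mul_eq hg
    exact ⟨hgS, isUnit_det_of_transpose_mul_mul_eq hSdet hgS⟩
  refine ⟨phiWedge_mem_orthogonalAlgebra S,
    fun g hg => phiWedge_mulVec_mulVec (hO g hg).1 (hO g hg).2,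
    fun x => SetLike.ext_iff.mp (orthogonalAlgebra_eq_span hSs hSdet) x,
    wedgeForm S, wedgeForm_phiWedge_phiWedge hSdet,
    fun g hg x y hx hy => wedgeForm_conj hSs hSdet (hO g hg).1 (hO g hg).2 hx hy,
    fun x hx h => eq_zero_of_forall_wedgeForm_eq_zero hSdet hx h⟩
end
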